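/- arXiv:2305.11212 — 6 statements merged into one kernel-verified Lean document; each statement's English description precedes it below -/
import Mathlib

section
/- Maximum energy of the environment in the finite Landauer-erasure protocol (Proposition, scaled by β): Let d ≥ 2 and T ≥ 2 be integers, ε ∈ (0, 1/2], and let ρ be a density matrix on ℂ^d. Let ρ'_ε be the target erasure state and ρ_t (t = 1,…,T) the straight-line erasure path from ρ to ρ'_ε, and for each t let λ_min(ρ_t) denote the smallest eigenvalue of ρ_t. Then Σ_{t=1}^{T} ln(1/λ_min(ρ_t)) ≤ T·(ln((d−1)/ε) + 1) − (ln(2πT))/2 − 1/(12T+1). -/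
open Matrix BigOperators
open scoped ComplexOrder

/-- The matrix unit `|e₀⟩⟨e₀|` in the `(0,0)` entry. -/
noncomputable def E00 (d : ℕ) : Matrix (Fin d) (Fin d) ℂ :=
  Matrix.of fun i j => if (i : ℕ) = 0 ∧ (j : ℕ) = 0 then 1 else 0

/-- The target erasure state `ρ'_ε = (1-ε)·E₀₀ + (ε/(d-1))·(I - E₀₀)`. -/
noncomputable def targetState (d : ℕ) (ε : ℝ) : Matrix (Fin d) (Fin d) ℂ :=
  (1 - ε : ℝ) • E00 d + (ε / ((d : ℝ) - 1)) • (1 - E00 d)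

/-- The matrix logarithm of a Hermitian matrix, via its spectral decomposition
(continuous functional calculus applied to `Real.log`); junk value `0` otherwise. -/
noncomputable def matLog {d : ℕ} (A : Matrix (Fin d) (Fin d) ℂ) :
    Matrix (Fin d) (Fin d) ℂ :=
  if hA : A.IsHermitian then hA.cfc Real.log else 0

/-- The von Neumann entropy `S(ρ) = ∑ᵢ (-λᵢ ln λᵢ)` of a Hermitian matrix. -/
noncomputable def vnEntropy {d : ℕ} (ρ : Matrix (Fin d) (Fin d) ℂ) : ℝ :=
  if hρ : ρ.IsHermitian then ∑ i, Real.negMulLog (hρ.eigenvalues i) else 0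

/-- The straight-line erasure path `ρ_t = ρ + (t/T)·(ρ'_ε - ρ)`. -/
noncomputable def erasurePath {d : ℕ} (ρ : Matrix (Fin d) (Fin d) ℂ) (ε : ℝ)
    (T t : ℕ) : Matrix (Fin d) (Fin d) ℂ :=
  ρ + ((t : ℝ) / (T : ℝ)) • (targetState d ε - ρ)

/-- The dimensionless protocol heat
`βQ = ∑_{t=1}^T Re tr[(ρ_t - ρ_{t-1})·log ρ_t]`. -/
noncomputable def protocolHeat {d : ℕ} (ρ : Matrix (Fin d) (Fin d) ℂ) (ε : ℝ)
    (T : ℕ) : ℝ :=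
  ∑ t ∈ Finset.Icc 1 T,
    ((erasurePath ρ ε T t - erasurePath ρ ε T (t - 1)) *
      matLog (erasurePath ρ ε T t)).trace.re

/-- The smallest eigenvalue of a Hermitian matrix (junk value `0` otherwise). -/
noncomputable def minEig {d : ℕ} (A : Matrix (Fin d) (Fin d) ℂ) : ℝ :=
  if hA : A.IsHermitian then ⨅ i, hA.eigenvalues i else 0

/-! Subtracting `(t/T)·ε/(d-1)` times the identity from `ρ_t` leaves
`(1 - t/T)·ρ + (t/T)(1 - ε - ε/(d-1))·E₀₀`, which is positive semidefinite, so
`λ_min(ρ_t) ≥ (t/T)·ε/(d-1)`. Summing the logarithms leaves `T·ln((d-1)/ε) + T ln T - ln T!`, and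
Robbins' bound `ln T! ≥ T ln T - T + ln(2πT)/2 + 1/(12T+1)` finishes. That bound holds because
`ln stirlingSeq n - 1/(12n+1)` decreases to `ln √π`: already the first term of the series for
`ln stirlingSeq n - ln stirlingSeq (n+1)` dominates `1/(12n+1) - 1/(12(n+1)+1)`. -/

open Filter Topology Real
open scoped Nat

namespace Stirling

lemma one_div_sub_one_div_le_log_stirlingSeq_sdiff (k : ℕ) :
    1 / (12 * ((k : ℝ) + 1) + 1) - 1 / (12 * ((k : ℝ) + 2) + 1) ≤
      log (stirlingSeq (k + 1)) - log (stirlingSeq (k + 2)) := by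
  refine le_trans ?_ (le_hasSum (log_stirlingSeq_sdiff_hasSum k) 0 fun j _ => by positivity)
  have hk : (0 : ℝ) ≤ k := k.cast_nonneg
  push_cast
  rw [div_sub_div _ _ (by positivity) (by positivity), div_le_iff₀ (by positivity)]
  field_simp
  nlinarith

lemma log_sqrt_pi_add_one_div_le_log_stirlingSeq {n : ℕ} (hn : n ≠ 0) :
    log √π + 1 / (12 * (n : ℝ) + 1) ≤ log (stirlingSeq n) := by
  set b : ℕ → ℝ := fun k => log (stirlingSeq (k + 1)) - 1 / (12 * ((k : ℝ) + 1) + 1)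
  have hanti : Antitone b := antitone_nat_of_succ_le fun k => by
    have := one_div_sub_one_div_le_log_stirlingSeq_sdiff k
    simp only [b, Nat.cast_add_one, add_assoc, one_add_one_eq_two]
    linarith
  have hlim : Tendsto b atTop (𝓝 (log √π - 0)) := by
    refine ((tendsto_stirlingSeq_sqrt_pi.comp (tendsto_add_atTop_nat 1)).log
      (by positivity)).sub ?_
    simp only [one_div]
    exact Tendsto.inv_tendsto_atTop <| tendsto_atTop_add_const_right _ _ <|
      (tendsto_natCast_atTop_atTop.atTop_add tendsto_const_nhds).const_mul_atTop (by norm_num)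
  obtain ⟨m, rfl⟩ := Nat.exists_eq_succ_of_ne_zero hn
  have := hanti.le_of_tendsto hlim m
  simp only [b, sub_zero] at this
  push_cast
  linarith

theorem le_log_factorial_robbins {n : ℕ} (hn : n ≠ 0) :
    n * log n - n + log (2 * π * n) / 2 + 1 / (12 * (n : ℝ) + 1) ≤ log n ! := by
  have hn0 : (0 : ℝ) < n := by positivity
  have h := log_sqrt_pi_add_one_div_le_log_stirlingSeq hn
  rw [log_stirlingSeq_formula, log_sqrt pi_pos.le, log_div hn0.ne' (exp_pos 1).ne', log_exp,
    log_mul two_ne_zero hn0.ne'] at h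
  rw [log_mul (by positivity) hn0.ne', log_mul two_ne_zero pi_pos.ne']
  linarith

end Stirling

open scoped MatrixOrder in
lemma Matrix.IsHermitian.le_eigenvalues_of_posSemidef_sub {n 𝕜 : Type*} [Fintype n]
    [DecidableEq n] [RCLike 𝕜] {A : Matrix n n 𝕜} (hA : A.IsHermitian) {c : ℝ}
    (h : (A - c • 1).PosSemidef) (i : n) : c ≤ hA.eigenvalues i := by
  have hc : algebraMap ℝ (Matrix n n 𝕜) c ≤ A := by
    rwa [Algebra.algebraMap_eq_smul_one, Matrix.le_iff]
  exact (algebraMap_le_iff_le_spectrum hA.isSelfAdjoint).mp hc _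
    (hA.eigenvalues_mem_spectrum_real i)

lemma le_minEig_of_posSemidef_sub {d : ℕ} [NeZero d] {A : Matrix (Fin d) (Fin d) ℂ} {c : ℝ}
    (h : (A - c • 1).PosSemidef) : c ≤ minEig A := by
  have hA : A.IsHermitian := by
    simpa using h.isHermitian.add (isHermitian_one.smul (IsSelfAdjoint.all c))
  rw [minEig, dif_pos hA]
  exact le_ciInf (hA.le_eigenvalues_of_posSemidef_sub h)

lemma E00_eq_vecMulVec (d : ℕ) :
    E00 d = vecMulVec (fun i : Fin d => if (i : ℕ) = 0 then 1 else 0)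
      (star fun i : Fin d => if (i : ℕ) = 0 then 1 else 0) := by
  ext i j
  simp only [E00, of_apply, vecMulVec_apply, Pi.star_apply]
  split_ifs <;> simp_all

lemma E00_posSemidef (d : ℕ) : (E00 d).PosSemidef := by
  rw [E00_eq_vecMulVec]
  exact posSemidef_vecMulVec_self_star _

lemma targetState_eq (d : ℕ) (ε : ℝ) :
    targetState d ε = (ε / ((d : ℝ) - 1)) • 1 + (1 - ε - ε / ((d : ℝ) - 1)) • E00 d := by
  rw [targetState]
  module

lemma erasurePath_sub_smul_one {d : ℕ} (ρ : Matrix (Fin d) (Fin d) ℂ) (ε : ℝ) (T t : ℕ) :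
    erasurePath ρ ε T t - ((t / T : ℝ) * (ε / ((d : ℝ) - 1))) • 1 =
      (1 - t / T : ℝ) • ρ + ((t / T : ℝ) * (1 - ε - ε / ((d : ℝ) - 1))) • E00 d := by
  rw [erasurePath, targetState_eq]
  module

lemma le_minEig_erasurePath {d : ℕ} (hd : 2 ≤ d) {ε : ℝ} (hε : ε ≤ 1 / 2)
    {ρ : Matrix (Fin d) (Fin d) ℂ} (hρ : ρ.PosSemidef) {T t : ℕ} (htT : t ≤ T) :
    (t / T : ℝ) * (ε / ((d : ℝ) - 1)) ≤ minEig (erasurePath ρ ε T t) := by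
  have : NeZero d := ⟨by omega⟩
  have hd1 : (1 : ℝ) ≤ d - 1 := by
    have : (2 : ℝ) ≤ d := by exact_mod_cast hd
    linarith
  have hs : (t / T : ℝ) ≤ 1 := div_le_one_of_le₀ (by exact_mod_cast htT) T.cast_nonneg
  have hgap : ε / ((d : ℝ) - 1) ≤ 1 - ε := by
    rw [div_le_iff₀ (by linarith)]
    nlinarith
  apply le_minEig_of_posSemidef_sub
  rw [erasurePath_sub_smul_one]
  exact (hρ.smul (sub_nonneg.mpr hs)).add <|
    (E00_posSemidef d).smul (mul_nonneg (by positivity) (by linarith))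

lemma Real.sum_log_Icc_eq_log_factorial (n : ℕ) :
    ∑ t ∈ Finset.Icc 1 n, log t = log n ! := by
  have hne (t : ℕ) (ht : t ∈ Finset.Icc 1 n) : (t : ℝ) ≠ 0 := by
    have := (Finset.mem_Icc.mp ht).1
    positivity
  rw [← log_prod hne, ← Nat.cast_prod, ← Finset.Ico_add_one_right_eq_Icc,
    Finset.prod_Ico_id_eq_factorial]

lemma log_one_div_minEig_erasurePath_le {d : ℕ} (hd : 2 ≤ d) {ε : ℝ}
    (hε : ε ∈ Set.Ioc (0 : ℝ) (1 / 2)) {ρ : Matrix (Fin d) (Fin d) ℂ} (hρ : ρ.PosSemidef)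
    {T t : ℕ} (ht : t ∈ Finset.Icc 1 T) :
    log (1 / minEig (erasurePath ρ ε T t)) ≤ log (((d : ℝ) - 1) / ε) + log T - log t := by
  obtain ⟨ht1, htT⟩ := Finset.mem_Icc.mp ht
  have hd1 : (0 : ℝ) < d - 1 := by
    have : (2 : ℝ) ≤ d := by exact_mod_cast hd
    linarith
  have ht0 : (0 : ℝ) < t := by exact_mod_cast ht1
  have hT0 : (0 : ℝ) < T := by exact_mod_cast ht1.trans htT
  have hmin := le_minEig_erasurePath hd hε.2 hρ htT
  have hs : (0 : ℝ) < t / T := div_pos ht0 hT0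
  have hδ : 0 < ε / ((d : ℝ) - 1) := div_pos hε.1 hd1
  calc log (1 / minEig (erasurePath ρ ε T t))
      ≤ log (1 / ((t / T : ℝ) * (ε / ((d : ℝ) - 1)))) :=
        log_le_log (one_div_pos.mpr ((mul_pos hs hδ).trans_le hmin))
          (one_div_le_one_div_of_le (mul_pos hs hδ) hmin)
    _ = log (((d : ℝ) - 1) / ε) + log T - log t := by
        rw [one_div, log_inv, log_mul hs.ne' hδ.ne', log_div ht0.ne' hT0.ne',
          log_div hε.1.ne' hd1.ne', log_div hd1.ne' hε.1.ne']
        ring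

open Real in
theorem max_erasure_energy_general
    (d : ℕ) (hd : 2 ≤ d) (T : ℕ) (hT : 2 ≤ T) (ε : ℝ)
    (hε : ε ∈ Set.Ioc (0 : ℝ) (1 / 2))
    (ρ : Matrix (Fin d) (Fin d) ℂ) (hρ : ρ.PosSemidef) :
    ∑ t ∈ Finset.Icc 1 T, Real.log (1 / minEig (erasurePath ρ ε T t)) ≤
      (T : ℝ) * (Real.log (((d : ℝ) - 1) / ε) + 1) -
        Real.log (2 * π * (T : ℝ)) / 2 - 1 / (12 * (T : ℝ) + 1) := by
  have hcard : (Finset.Icc 1 T).card = T := by simp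
  calc ∑ t ∈ Finset.Icc 1 T, log (1 / minEig (erasurePath ρ ε T t))
      ≤ ∑ t ∈ Finset.Icc 1 T, (log (((d : ℝ) - 1) / ε) + log T - log t) :=
        Finset.sum_le_sum fun t ht => log_one_div_minEig_erasurePath_le hd hε hρ ht
    _ = T * (log (((d : ℝ) - 1) / ε) + log T) - log T ! := by
        rw [Finset.sum_sub_distrib, Finset.sum_const, hcard, nsmul_eq_mul,
          sum_log_Icc_eq_log_factorial]
    _ ≤ _ := by
        have := Stirling.le_log_factorial_robbins (n := T) (by omega)
        linarith

open Real in
/-- **Maximum energy of the environment in the finite Landauer-erasure protocol**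
(Proposition, scaled by `β`): the sum `∑_{t=1}^T ln(1/λ_min(ρ_t))` is bounded by
`T·(ln((d-1)/ε) + 1) - ln(2πT)/2 - 1/(12T+1)`. -/
theorem max_erasure_energy
    (d : ℕ) (hd : 2 ≤ d) (T : ℕ) (hT : 2 ≤ T) (ε : ℝ)
    (hε : ε ∈ Set.Ioc (0 : ℝ) (1 / 2))
    (ρ : Matrix (Fin d) (Fin d) ℂ) (hρ : ρ.PosSemidef) (htr : ρ.trace = 1) :
    ∑ t ∈ Finset.Icc 1 T, Real.log (1 / minEig (erasurePath ρ ε T t)) ≤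
      (T : ℝ) * (Real.log (((d : ℝ) - 1) / ε) + 1) -
        Real.log (2 * π * (T : ℝ)) / 2 - 1 / (12 * (T : ℝ) + 1) :=
  max_erasure_energy_general d hd T hT ε hε ρ hρ
end

section
/- Combinatorial core of the classical query lower bound for Simon's problem (Proposition): Let N ≥ 1 and M be natural numbers, let Δ ∈ (0, 1/2), and suppose (M : ℝ) < √(2Δ/(1+Δ))·2^{N/2}. Let x : Fin M → 𝔽₂^N be injective. Then the number of strings s ∈ 𝔽₂^N with s ≠ 0 such that x(k) + x(m) = s for some pair of indices k ≠ m is strictly less than 2Δ·(2^N − 1). (Consequently any classical algorithm making fewer than ⌈√(2Δ/(1+Δ))·2^{N/2}⌉ distinct queries has average success probability at most 1/2 + Δ on Simon's problem.) -/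
/-- **Combinatorial core of the classical query lower bound for Simon's problem**:
if the number `M` of distinct queries satisfies `M < √(2Δ/(1+Δ))·2^{N/2}`, then the
number of nonzero hidden strings `s` revealed by some collision `x k ⊕ x m = s`
is strictly less than `2Δ·(2^N - 1)`. -/
theorem simon_classical_query_lower_bound_core
    (N : ℕ) (hN : 1 ≤ N) (M : ℕ) (Δ : ℝ) (hΔ : Δ ∈ Set.Ioo (0 : ℝ) (1 / 2))
    (hM : (M : ℝ) < Real.sqrt (2 * Δ / (1 + Δ)) * (2 : ℝ) ^ ((N : ℝ) / 2))
    (x : Fin M → (Fin N → ZMod 2)) (hx : Function.Injective x) :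
    (Nat.card {s : Fin N → ZMod 2 //
        s ≠ 0 ∧ ∃ k m : Fin M, k ≠ m ∧ x k + x m = s} : ℝ) <
      2 * Δ * ((2 : ℝ) ^ N - 1) := by
  classical
  obtain ⟨hΔ0, hΔhalf⟩ := hΔ
  -- Step 1: inject the set of revealed strings into non-diagonal unordered pairs
  set S := {s : Fin N → ZMod 2 // s ≠ 0 ∧ ∃ k m : Fin M, k ≠ m ∧ x k + x m = s}
  have hcard : Nat.card S ≤ M.choose 2 := by
    have hinj : ∃ g : S → {a : Sym2 (Fin M) // ¬ a.IsDiag}, Function.Injective g := by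
      have hsel : ∀ p : S, ∃ pr : Fin M × Fin M, pr.1 ≠ pr.2 ∧ x pr.1 + x pr.2 = (p : Fin N → ZMod 2) := by
        rintro ⟨s, -, k, m, h1, h2⟩
        exact ⟨(k, m), h1, h2⟩
      choose pr hne heq using hsel
      refine ⟨fun p => ⟨s((pr p).1, (pr p).2), by rw [Sym2.mk_isDiag_iff]; exact hne p⟩, ?_⟩
      intro p q h
      rw [Subtype.mk.injEq, Sym2.eq_iff] at h
      apply Subtype.ext
      have hp := heq p
      have hq := heq q
      rcases h with ⟨h1, h2⟩ | ⟨h1, h2⟩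
      · rw [h1, h2] at hp
        exact hp.symm.trans hq
      · rw [h1, h2, add_comm] at hp
        exact hp.symm.trans hq
    obtain ⟨g, hg⟩ := hinj
    calc Nat.card S ≤ Nat.card {a : Sym2 (Fin M) // ¬ a.IsDiag} :=
          Nat.card_le_card_of_injective g hg
      _ = M.choose 2 := by
          rw [Nat.card_eq_fintype_card, Sym2.card_subtype_not_diag, Fintype.card_fin]
  -- Step 2: `2 * choose ≤ M^2` over ℕ
  have hchoose : 2 * M.choose 2 ≤ M * M := by
    rw [Nat.choose_two_right, mul_comm]
    calc M * (M - 1) / 2 * 2 ≤ M * (M - 1) := Nat.div_mul_le_self _ _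
      _ ≤ M * M := Nat.mul_le_mul_left _ (Nat.sub_le _ _)
  -- Step 3: square the hypothesis
  have h1Δ : (0:ℝ) < 1 + Δ := by linarith
  have hsq : (M : ℝ) * M < (2 * Δ / (1 + Δ)) * (2 : ℝ) ^ N := by
    have hM0 : (0:ℝ) ≤ (M : ℝ) := Nat.cast_nonneg M
    have := mul_self_lt_mul_self hM0 hM
    calc (M : ℝ) * M < (Real.sqrt (2 * Δ / (1 + Δ)) * (2 : ℝ) ^ ((N : ℝ) / 2)) *
          (Real.sqrt (2 * Δ / (1 + Δ)) * (2 : ℝ) ^ ((N : ℝ) / 2)) := this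
      _ = (2 * Δ / (1 + Δ)) * (2 : ℝ) ^ N := by
          have ha : Real.sqrt (2 * Δ / (1 + Δ)) * Real.sqrt (2 * Δ / (1 + Δ))
              = 2 * Δ / (1 + Δ) :=
            Real.mul_self_sqrt (by positivity)
          have hb : (2 : ℝ) ^ ((N : ℝ) / 2) * (2 : ℝ) ^ ((N : ℝ) / 2) = (2 : ℝ) ^ N := by
            rw [← Real.rpow_add (by norm_num), ← Real.rpow_natCast 2 N]
            norm_num
          calc Real.sqrt (2 * Δ / (1 + Δ)) * (2 : ℝ) ^ ((N : ℝ) / 2) *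
                (Real.sqrt (2 * Δ / (1 + Δ)) * (2 : ℝ) ^ ((N : ℝ) / 2))
              = (Real.sqrt (2 * Δ / (1 + Δ)) * Real.sqrt (2 * Δ / (1 + Δ))) *
                ((2 : ℝ) ^ ((N : ℝ) / 2) * (2 : ℝ) ^ ((N : ℝ) / 2)) := by ring
            _ = (2 * Δ / (1 + Δ)) * (2 : ℝ) ^ N := by rw [ha, hb]
  -- Step 4: combine
  have h2N : (2:ℝ) ≤ (2:ℝ) ^ N := by
    calc (2:ℝ) = 2 ^ 1 := (pow_one 2).symm
      _ ≤ 2 ^ N := pow_le_pow_right₀ (by norm_num) hN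
  have hle : (Nat.card S : ℝ) * 2 ≤ (M : ℝ) * M := by
    have : ((2 * M.choose 2 : ℕ) : ℝ) ≤ ((M * M : ℕ) : ℝ) := Nat.cast_le.mpr hchoose
    push_cast at this
    have hc : (Nat.card S : ℝ) ≤ (M.choose 2 : ℝ) := Nat.cast_le.mpr hcard
    linarith
  have key : (2 * Δ / (1 + Δ)) * (2 : ℝ) ^ N ≤ 2 * (2 * Δ * ((2 : ℝ) ^ N - 1)) := by
    rw [div_mul_eq_mul_div, div_le_iff₀ h1Δ]
    nlinarith [mul_nonneg hΔ0.le (by linarith : (0:ℝ) ≤ (2:ℝ)^N - 2),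
      mul_nonneg (mul_nonneg hΔ0.le hΔ0.le) (by linarith : (0:ℝ) ≤ (2:ℝ)^N - 1)]
  linarith
end

section
/- Estimation of the fraction of factorials (Lemma): Let N ≥ 1 be a natural number, Δ ∈ (0, 1/6), and set M := ⌈√(2Δ/(1+Δ))·2^{N/2}⌉ (one has M ≤ 2^N). Then ln((2^N)! / (2^N − M)!) ≥ √(2Δ/(1+Δ))·2^{N/2}·(N·ln 2 − 1) − 1. -/
set_option maxHeartbeats 1000000


/-- **Estimation of the fraction of factorials** (Lemma). -/
theorem fraction_of_factorials_estimate
    (N : ℕ) (hN : 1 ≤ N) (Δ : ℝ) (hΔ : Δ ∈ Set.Ioo (0 : ℝ) (1 / 6))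
    (M : ℕ)
    (hM : M = ⌈Real.sqrt (2 * Δ / (1 + Δ)) * (2 : ℝ) ^ ((N : ℝ) / 2)⌉₊) :
    Real.sqrt (2 * Δ / (1 + Δ)) * (2 : ℝ) ^ ((N : ℝ) / 2) *
        ((N : ℝ) * Real.log 2 - 1) - 1 ≤
      Real.log (((2 ^ N).factorial : ℝ) / ((2 ^ N - M).factorial : ℝ)) := by
  obtain ⟨hΔ0, hΔ6⟩ := hΔ
  have h1Δ : (0:ℝ) < 1 + Δ := by linarith
  set s := Real.sqrt (2 * Δ / (1 + Δ)) with hs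
  set c := s * (2 : ℝ) ^ ((N : ℝ) / 2) with hc
  have hfrac_pos : 0 < 2 * Δ / (1 + Δ) := by positivity
  have hfrac_le : 2 * Δ / (1 + Δ) ≤ 1 := by
    rw [div_le_one h1Δ]; linarith
  have hs_pos : 0 < s := Real.sqrt_pos.mpr hfrac_pos
  have hs_le : s ≤ 1 := Real.sqrt_le_one.mpr hfrac_le
  have hp_pos : (0:ℝ) < (2 : ℝ) ^ ((N : ℝ) / 2) := Real.rpow_pos_of_pos (by norm_num) _
  have hc_pos : 0 < c := mul_pos hs_pos hp_pos
  have hcb : c ≤ (2 : ℝ) ^ ((N : ℝ) / 2) := by nlinarith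
  have hcM : c ≤ (M:ℝ) := hM ▸ Nat.le_ceil c
  have hMc : (M:ℝ) < c + 1 := hM ▸ Nat.ceil_lt_add_one hc_pos.le
  have hM1 : 1 ≤ M := by
    rw [hM]; exact Nat.one_le_ceil_iff.mpr hc_pos
  have h2N : ((2^N : ℕ) : ℝ) = (2:ℝ) ^ (N:ℝ) := by
    rw [Real.rpow_natCast]; push_cast; ring
  have hNhalf : (N:ℝ)/2 ≤ (N:ℝ) := by
    have := Nat.cast_nonneg (α := ℝ) N; linarith
  have hMle : M ≤ 2^N := by
    rw [hM, Nat.ceil_le]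
    calc c ≤ (2 : ℝ) ^ ((N : ℝ) / 2) := hcb
      _ ≤ (2:ℝ) ^ (N:ℝ) := Real.rpow_le_rpow_of_exponent_le one_le_two hNhalf
      _ = ((2^N : ℕ):ℝ) := h2N.symm
  have hMcast : (M:ℝ) ≤ ((2^N : ℕ):ℝ) := by exact_mod_cast hMle
  set D : ℝ := ((2^N:ℕ):ℝ) - M + 1 with hD
  have hDpos : 0 < D := by rw [hD]; linarith
  have hcastD : ((2^N - M + 1 : ℕ) : ℝ) = D := by
    rw [hD]; push_cast [Nat.cast_sub hMle]; ring
  have hfpos : (0:ℝ) < ((2^N - M).factorial : ℝ) := by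
    exact_mod_cast Nat.factorial_pos _
  have hfac : ((2^N - M).factorial : ℝ) * D ^ M ≤ ((2^N).factorial : ℝ) := by
    have h := Nat.factorial_mul_pow_le_factorial (m := 2^N - M) (n := M)
    rw [Nat.sub_add_cancel hMle] at h
    rw [← hcastD]
    exact_mod_cast h
  have hkey : (M:ℝ) * Real.log D ≤
      Real.log (((2^N).factorial : ℝ) / ((2^N - M).factorial : ℝ)) := by
    have h1 : D ^ M ≤ ((2^N).factorial : ℝ) / ((2^N - M).factorial : ℝ) := by
      rw [le_div_iff₀ hfpos]; linarith [hfac]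
    have h2 := Real.log_le_log (by positivity) h1
    rwa [Real.log_pow] at h2
  rcases Nat.lt_or_ge N 2 with h2 | h2
  · -- N = 1
    interval_cases N
    have hlog2 : Real.log 2 < 1 := by
      have := Real.log_two_lt_d9; linarith
    have hD1 : (1:ℝ) ≤ D := by
      have hM2' : M ≤ 2 := by simpa using hMle
      have hM2 : (M:ℝ) ≤ 2 := by exact_mod_cast hM2'
      have h21 : ((2^1 : ℕ):ℝ) = 2 := by norm_num
      rw [hD, h21]; linarith
    have hlogD : 0 ≤ Real.log D := Real.log_nonneg hD1
    have hMpos : (0:ℝ) ≤ M := Nat.cast_nonneg M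
    push_cast
    nlinarith [hkey, hc_pos, mul_nonneg hMpos hlogD]
  · -- N ≥ 2
    have hN2 : (2:ℝ) ≤ (N:ℝ) := by exact_mod_cast h2
    have hlog2 : (0.6931471803:ℝ) < Real.log 2 := Real.log_two_gt_d9
    have hNlog : 1 ≤ (N:ℝ) * Real.log 2 := by nlinarith
    -- M ≤ 2^N / 2 + 1
    have hhalf : (2:ℝ) ^ ((N:ℝ)/2) ≤ ((2^N:ℕ):ℝ) / 2 := by
      have e1 : (2:ℝ) ^ ((N:ℝ)/2) ≤ (2:ℝ) ^ ((N:ℝ) - 1) :=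
        Real.rpow_le_rpow_of_exponent_le one_le_two (by linarith)
      have e2 : (2:ℝ) ^ ((N:ℝ) - 1) = (2:ℝ) ^ (N:ℝ) / 2 := by
        rw [Real.rpow_sub (by norm_num), Real.rpow_one]
      rw [h2N]; linarith
    have hMhalf : (M:ℝ) ≤ ((2^N:ℕ):ℝ) / 2 + 1 := by linarith
    have hDge : ((2^N:ℕ):ℝ) / 2 ≤ D := by rw [hD]; linarith
    have h2Npos : (0:ℝ) < ((2^N:ℕ):ℝ) := by positivity
    -- log D ≥ N log 2 - 1
    have hlogD : (N:ℝ) * Real.log 2 - 1 ≤ Real.log D := by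
      have ht : Real.log (((2^N:ℕ):ℝ) / D) ≤ ((2^N:ℕ):ℝ) / D - 1 :=
        Real.log_le_sub_one_of_pos (by positivity)
      have hratio : ((2^N:ℕ):ℝ) / D ≤ 2 := by
        rw [div_le_iff₀ hDpos]; linarith
      have hsplit : Real.log (((2^N:ℕ):ℝ) / D) =
          Real.log ((2^N:ℕ):ℝ) - Real.log D :=
        Real.log_div (ne_of_gt h2Npos) (ne_of_gt hDpos)
      have hlog2N : Real.log ((2^N:ℕ):ℝ) = (N:ℝ) * Real.log 2 := by
        rw [h2N, Real.log_rpow (by norm_num)]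
      rw [hsplit, hlog2N] at ht
      linarith
    have hNlog0 : 0 ≤ (N:ℝ) * Real.log 2 - 1 := by linarith
    have hMpos : (0:ℝ) ≤ M := Nat.cast_nonneg M
    have : c * ((N:ℝ) * Real.log 2 - 1) ≤ (M:ℝ) * Real.log D := by
      calc c * ((N:ℝ) * Real.log 2 - 1) ≤ (M:ℝ) * ((N:ℝ) * Real.log 2 - 1) :=
            mul_le_mul_of_nonneg_right hcM hNlog0
        _ ≤ (M:ℝ) * Real.log D := mul_le_mul_of_nonneg_left hlogD hMpos
    linarith [hkey]
end

section
/- Optimal choice of the parameter Δ in the classical energy lower bound: Define g(Δ) := ((1 − 6Δ)/(6 − 12Δ))·√(2Δ/(1+Δ)) for Δ ∈ (0, 1/6), and let Δ* := 2 − √15/2. Then Δ* ∈ (0, 1/6), and for every Δ ∈ (0, 1/6), g(Δ) ≤ g(Δ*) = ((3√15 − 11)/(6√15 − 18))·√((8 − 2√15)/(6 − √15)). -/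
/-- The constant factor `g(Δ) = ((1-6Δ)/(6-12Δ))·√(2Δ/(1+Δ))` of the leading
order in the classical energy lower bound for Simon's problem. -/
noncomputable def simonConst (Δ : ℝ) : ℝ :=
  (1 - 6 * Δ) / (6 - 12 * Δ) * Real.sqrt (2 * Δ / (1 + Δ))

/-- Key polynomial inequality certificate. -/
lemma simon_key (s D : ℝ) (hs : s ^ 2 = 15) (h4 : s ≤ 4) (hD : D ≤ 1 / 6) :
    (1 - 6 * D) ^ 2 * (2 * D) * ((6 - 12 * (2 - s / 2)) ^ 2 * (1 + (2 - s / 2))) ≤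
      (1 - 6 * (2 - s / 2)) ^ 2 * (2 * (2 - s / 2)) * ((6 - 12 * D) ^ 2 * (1 + D)) := by
  have H :
      (1 - 6 * (2 - s / 2)) ^ 2 * (2 * (2 - s / 2)) * ((6 - 12 * D) ^ 2 * (1 + D)) -
        (1 - 6 * D) ^ 2 * (2 * D) * ((6 - 12 * (2 - s / 2)) ^ 2 * (1 + (2 - s / 2))) =
        24 * ((D - (2 - s / 2)) ^ 2 * ((552 - 120 * s) * (1 / 6 - D) + 28 * (4 - s))) +
          (s ^ 2 - 15) *
            (144 - 36 * s - 1224 * D + 288 * s * D + 2304 * D ^ 2 - 432 * s * D ^ 2 -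
              864 * D ^ 3) := by
    ring
  have h1 : (0 : ℝ) ≤ (D - (2 - s / 2)) ^ 2 * ((552 - 120 * s) * (1 / 6 - D) + 28 * (4 - s)) := by
    apply mul_nonneg (sq_nonneg _)
    have : (0 : ℝ) ≤ (552 - 120 * s) * (1 / 6 - D) := by
      apply mul_nonneg <;> linarith
    linarith
  rw [hs] at H
  linarith

/-- `simonConst` written as a single square root on `(0, 1/6)`. -/
lemma simonConst_eq_sqrt (D : ℝ) (hD0 : 0 < D) (hD : D < 1 / 6) :
    simonConst D = Real.sqrt ((1 - 6 * D) ^ 2 * (2 * D) / ((6 - 12 * D) ^ 2 * (1 + D))) := by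
  have h1 : (0 : ℝ) < 6 - 12 * D := by linarith
  have h2 : (0 : ℝ) < 1 + D := by linarith
  have h3 : (0 : ℝ) ≤ (1 - 6 * D) / (6 - 12 * D) := by
    apply div_nonneg <;> linarith
  have harg : (1 - 6 * D) ^ 2 * (2 * D) / ((6 - 12 * D) ^ 2 * (1 + D)) =
      ((1 - 6 * D) / (6 - 12 * D)) ^ 2 * (2 * D / (1 + D)) := by
    field_simp
  rw [simonConst, harg, Real.sqrt_mul (sq_nonneg _), Real.sqrt_sq h3]

/-- **Optimal choice of the parameter Δ in the classical energy lower bound**: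
`Δ* = 2 - √15/2` lies in `(0, 1/6)` and maximizes `g` there, with the stated
closed-form value of the maximum. -/
theorem simonConst_optimal_delta :
    (2 - Real.sqrt 15 / 2) ∈ Set.Ioo (0 : ℝ) (1 / 6) ∧
    (∀ Δ ∈ Set.Ioo (0 : ℝ) (1 / 6), simonConst Δ ≤ simonConst (2 - Real.sqrt 15 / 2)) ∧
    simonConst (2 - Real.sqrt 15 / 2) =
      (3 * Real.sqrt 15 - 11) / (6 * Real.sqrt 15 - 18) *
        Real.sqrt ((8 - 2 * Real.sqrt 15) / (6 - Real.sqrt 15)) := by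
  set s : ℝ := Real.sqrt 15 with hsdef
  have hs : s ^ 2 = 15 := Real.sq_sqrt (by norm_num)
  have hs0 : 0 ≤ s := Real.sqrt_nonneg 15
  have h4 : s < 4 := by nlinarith
  have h113 : 11 / 3 < s := by nlinarith
  have hmem : (2 - s / 2) ∈ Set.Ioo (0 : ℝ) (1 / 6) := by
    constructor <;> [linarith; linarith]
  refine ⟨hmem, ?_, ?_⟩
  · intro Δ hΔ
    obtain ⟨hΔ0, hΔ6⟩ := hΔ
    rw [simonConst_eq_sqrt Δ hΔ0 hΔ6, simonConst_eq_sqrt _ hmem.1 hmem.2]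
    apply Real.sqrt_le_sqrt
    have hden1 : (0 : ℝ) < (6 - 12 * Δ) ^ 2 * (1 + Δ) :=
      mul_pos (pow_pos (by linarith) 2) (by linarith)
    have hden2 : (0 : ℝ) < (6 - 12 * (2 - s / 2)) ^ 2 * (1 + (2 - s / 2)) := by
      have h1 : (0 : ℝ) < 6 - 12 * (2 - s / 2) := by
        have := hmem.2; linarith
      have h2 : (0 : ℝ) < 1 + (2 - s / 2) := by
        have := hmem.1; linarith
      exact mul_pos (pow_pos h1 2) h2
    rw [div_le_div_iff₀ hden1 hden2]
    exact simon_key s Δ hs h4.le hΔ6.le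
  · rw [simonConst]
    have harg : 2 * (2 - s / 2) / (1 + (2 - s / 2)) = (8 - 2 * s) / (6 - s) := by
      rw [div_eq_div_iff] <;> [ring; linarith; linarith]
    rw [harg]
    congr 1
    rw [div_eq_div_iff] <;> [ring; linarith; linarith]
end

section
/- Counting collision-free query sets for Simon's problem (counting step of the achievability Proposition): Let N ≥ 1 be a natural number and s ∈ 𝔽₂^N with s ≠ 0. For every natural number M, the number of M-element subsets A of 𝔽₂^N such that no element x ∈ A satisfies x + s ∈ A equals C(2^{N−1}, M)·2^M. -/
/-- **Counting collision-free query sets for Simon's problem**: for a nonzero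
hidden string `s`, the number of `M`-element subsets of `𝔽₂^N` containing no
pair `{x, x + s}` equals `C(2^{N-1}, M)·2^M`. -/
theorem count_collision_free_query_sets
    (N : ℕ) (hN : 1 ≤ N) (s : Fin N → ZMod 2) (hs : s ≠ 0) (M : ℕ) :
    Nat.card {A : Finset (Fin N → ZMod 2) //
        A.card = M ∧ ∀ x ∈ A, x + s ∉ A} =
      Nat.choose (2 ^ (N - 1)) M * 2 ^ M := by
  classical
  have card2 : ∀ a : ZMod 2, a = 0 ∨ a = 1 := by decide
  have hadd2 : ∀ a : ZMod 2, a + a = 0 := by decide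
  obtain ⟨i, hi⟩ : ∃ i, s i ≠ 0 := by
    by_contra h; push_neg at h; exact hs (funext h)
  have hi1 : s i = 1 := by
    rcases card2 (s i) with h | h
    · exact absurd h hi
    · exact h
  have hGss : ∀ t : Fin N → ZMod 2, t + t = 0 := fun t => funext fun j => hadd2 (t j)
  have hcancel : ∀ x : Fin N → ZMod 2, x + s + s = x := by
    intro x; rw [add_assoc, hGss, add_zero]
  set ρ : (Fin N → ZMod 2) → (Fin N → ZMod 2) := fun x => x + x i • s with hρdef
  have hρ0 : ∀ x, x i = 0 → ρ x = x := by intro x h; simp [hρdef, h]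
  have hρ1 : ∀ x, x i = 1 → ρ x = x + s := by intro x h; simp [hρdef, h]
  have hρi : ∀ x, ρ x i = 0 := by
    intro x
    show x i + x i • s i = 0
    rw [hi1, smul_eq_mul, mul_one, hadd2]
  have hρor : ∀ x, ρ x = x ∨ ρ x = x + s := by
    intro x
    rcases card2 (x i) with h | h
    · exact Or.inl (hρ0 x h)
    · exact Or.inr (hρ1 x h)
  have hρeq : ∀ x y, ρ x = ρ y → x = y ∨ x = y + s := by
    intro x y h
    rcases hρor x with h1 | h1 <;> rcases hρor y with h2 | h2 <;> rw [h1, h2] at h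
    · exact Or.inl h
    · exact Or.inr h
    · right; rw [← h, hcancel]
    · exact Or.inl (add_right_cancel h)
  set R : Finset (Fin N → ZMod 2) := Finset.univ.filter (fun y => y i = 0) with hRdef
  have hmemR : ∀ y, y ∈ R ↔ y i = 0 := by intro y; simp [hRdef]
  have hRcard : R.card = 2 ^ (N - 1) := by
    have hcompl : Rᶜ = R.image (· + s) := by
      ext y
      simp only [Finset.mem_compl, Finset.mem_image]
      constructor
      · intro hy
        rw [hmemR] at hy
        refine ⟨y + s, ?_, hcancel y⟩
        rw [hmemR]
        show y i + s i = 0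
        rcases card2 (y i) with h | h
        · exact absurd h hy
        · rw [h, hi1]; exact hadd2 1
      · rintro ⟨r, hr, rfl⟩
        rw [hmemR] at hr ⊢
        show ¬ (r i + s i = 0)
        rw [hr, hi1, zero_add]
        exact one_ne_zero
    have h1 : Rᶜ.card = R.card := by
      rw [hcompl]; exact Finset.card_image_of_injective _ (add_left_injective s)
    have h2 : R.card + Rᶜ.card = 2 ^ N := by
      rw [Finset.card_add_card_compl]
      simp [Fintype.card_fun]
    have h3 : 2 ^ N = 2 * 2 ^ (N - 1) := by
      conv_lhs => rw [← Nat.sub_add_cancel hN]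
      rw [pow_succ]; ring
    omega
  rw [Nat.card_eq_fintype_card, Fintype.card_subtype]
  have hmaps : ∀ A ∈ Finset.univ.filter
      (fun A : Finset (Fin N → ZMod 2) => A.card = M ∧ ∀ x ∈ A, x + s ∉ A),
      A.image ρ ∈ R.powersetCard M := by
    intro A hA
    rw [Finset.mem_filter] at hA
    obtain ⟨-, hAcard, hAcf⟩ := hA
    rw [Finset.mem_powersetCard]
    constructor
    · intro y hy
      rw [Finset.mem_image] at hy
      obtain ⟨x, -, rfl⟩ := hy
      rw [hmemR]; exact hρi x
    · rw [Finset.card_image_of_injOn, hAcard]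
      intro x hx y hy hxy
      rcases hρeq x y hxy with h | h
      · exact h
      · rw [h] at hx; exact absurd hx (hAcf y hy)
  rw [Finset.card_eq_sum_card_fiberwise hmaps]
  have hfib : ∀ B ∈ R.powersetCard M,
      ((Finset.univ.filter fun A : Finset (Fin N → ZMod 2) =>
        A.card = M ∧ ∀ x ∈ A, x + s ∉ A).filter fun A => A.image ρ = B).card = 2 ^ M := by
    intro B hB
    rw [Finset.mem_powersetCard] at hB
    obtain ⟨hBR, hBcard⟩ := hB
    have hBi : ∀ r ∈ B, r i = 0 := fun r hr => (hmemR r).1 (hBR hr)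
    set g : Finset (Fin N → ZMod 2) → Finset (Fin N → ZMod 2) :=
      fun S => S ∪ (B \ S).image (· + s) with hgdef
    have hmemg : ∀ S x, x ∈ g S ↔ x ∈ S ∨ ∃ r ∈ B \ S, r + s = x := by
      intro S x
      simp only [hgdef, Finset.mem_union, Finset.mem_image]
    have hfilg : ∀ S ⊆ B, (g S).filter (fun x => x i = 0) = S := by
      intro S hSB
      ext x
      rw [Finset.mem_filter, hmemg]
      constructor
      · rintro ⟨hx | ⟨r, hr, rfl⟩, hxi⟩
        · exact hx
        · exfalso
          have h1 : r i = 0 := hBi r (Finset.mem_sdiff.1 hr).1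
          rw [show (r + s) i = r i + s i from rfl, h1, hi1, zero_add] at hxi
          exact one_ne_zero hxi
      · intro hx
        exact ⟨Or.inl hx, hBi x (hSB hx)⟩
    have hcardg : ∀ S ⊆ B, (g S).card = M := by
      intro S hSB
      have hdisj : Disjoint S ((B \ S).image (· + s)) := by
        rw [Finset.disjoint_left]
        intro x hxS hximg
        rw [Finset.mem_image] at hximg
        obtain ⟨r, hr, hrx⟩ := hximg
        have h0 : x i = 0 := hBi x (hSB hxS)
        have h1 : r i = 0 := hBi r (Finset.mem_sdiff.1 hr).1
        rw [← hrx, show (r + s) i = r i + s i from rfl, h1, hi1, zero_add] at h0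
        exact one_ne_zero h0
      have := Finset.card_le_card hSB
      simp only [hgdef]
      rw [Finset.card_union_of_disjoint hdisj,
        Finset.card_image_of_injective _ (add_left_injective s),
        Finset.card_sdiff_of_subset hSB]
      omega
    have hcfg : ∀ S ⊆ B, ∀ x ∈ g S, x + s ∉ g S := by
      intro S hSB x hx hxs
      rw [hmemg] at hx hxs
      rcases hx with hx | ⟨r, hr, rfl⟩
      · rcases hxs with hxs | ⟨r, hr, hrs⟩
        · have h0 : x i = 0 := hBi x (hSB hx)
          have h1 : (x + s) i = 0 := hBi _ (hSB hxs)
          rw [show (x + s) i = x i + s i from rfl, h0, hi1, zero_add] at h1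
          exact one_ne_zero h1
        · have : r = x := add_right_cancel hrs
          rw [this] at hr
          exact (Finset.mem_sdiff.1 hr).2 hx
      · rcases hxs with hxs | ⟨r', hr', hrs⟩
        · rw [hcancel] at hxs
          exact (Finset.mem_sdiff.1 hr).2 hxs
        · rw [hcancel] at hrs
          have h1 : r' i = 0 := hBi r' (Finset.mem_sdiff.1 hr').1
          have h2 : r i = 0 := hBi r (Finset.mem_sdiff.1 hr).1
          rw [← hrs, show (r' + s) i = r' i + s i from rfl, h1, hi1, zero_add] at h2
          exact one_ne_zero h2
    have himg : ∀ S ⊆ B, (g S).image ρ = B := by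
      intro S hSB
      ext y
      simp only [Finset.mem_image]
      constructor
      · rintro ⟨x, hx, rfl⟩
        rw [hmemg] at hx
        rcases hx with hx | ⟨r, hr, rfl⟩
        · rw [hρ0 x (hBi x (hSB hx))]; exact hSB hx
        · have h1 : r i = 0 := hBi r (Finset.mem_sdiff.1 hr).1
          have h2 : (r + s) i = 1 := by
            rw [show (r + s) i = r i + s i from rfl, h1, hi1, zero_add]
          rw [hρ1 _ h2, hcancel]
          exact (Finset.mem_sdiff.1 hr).1
      · intro hy
        by_cases hyS : y ∈ S
        · exact ⟨y, (hmemg S y).2 (Or.inl hyS), hρ0 y (hBi y hy)⟩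
        · refine ⟨y + s, (hmemg S _).2 (Or.inr ⟨y, Finset.mem_sdiff.2 ⟨hy, hyS⟩, rfl⟩), ?_⟩
          have h2 : (y + s) i = 1 := by
            rw [show (y + s) i = y i + s i from rfl, hBi y hy, hi1, zero_add]
          rw [hρ1 _ h2, hcancel]
    have hrecon : ∀ A : Finset (Fin N → ZMod 2), (∀ x ∈ A, x + s ∉ A) →
        A.image ρ = B → A = g (A.filter fun x => x i = 0) := by
      intro A hcf himgA
      ext x
      rw [hmemg]
      constructor
      · intro hx
        rcases card2 (x i) with h0 | h1
        · exact Or.inl (Finset.mem_filter.2 ⟨hx, h0⟩)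
        · right
          refine ⟨ρ x, ?_, by rw [hρ1 x h1, hcancel]⟩
          rw [Finset.mem_sdiff]
          constructor
          · rw [← himgA]; exact Finset.mem_image_of_mem ρ hx
          · intro hmem
            have hmem' : ρ x ∈ A := (Finset.mem_filter.1 hmem).1
            have hx2 : ρ x + s = x := by rw [hρ1 x h1, hcancel]
            exact hcf _ hmem' (by rw [hx2]; exact hx)
      · rintro (hx | ⟨r, hr, rfl⟩)
        · exact (Finset.mem_filter.1 hx).1
        · obtain ⟨hrB, hrS⟩ := Finset.mem_sdiff.1 hr
          have hr0 : r i = 0 := hBi r hrB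
          rw [← himgA, Finset.mem_image] at hrB
          obtain ⟨y, hy, hyr⟩ := hrB
          rcases hρor y with h | h
          · exfalso
            rw [h] at hyr
            subst hyr
            exact hrS (Finset.mem_filter.2 ⟨hy, hr0⟩)
          · rw [h] at hyr
            rw [← hyr, hcancel]
            exact hy
    rw [show (2 : ℕ) ^ M = B.powerset.card by rw [Finset.card_powerset, hBcard]]
    apply Finset.card_bij (fun A _ => A.filter fun x => x i = 0)
    · intro A hA
      simp only [Finset.mem_filter] at hA
      obtain ⟨⟨-, hAcard, hAcf⟩, hAimg⟩ := hA
      rw [Finset.mem_powerset]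
      intro x hx
      obtain ⟨hxA, hxi⟩ := Finset.mem_filter.1 hx
      rw [← hAimg]
      exact (hρ0 x hxi) ▸ Finset.mem_image_of_mem ρ hxA
    · intro A hA A' hA' heq
      simp only [Finset.mem_filter] at hA hA'
      obtain ⟨⟨-, -, hAcf⟩, hAimg⟩ := hA
      obtain ⟨⟨-, -, hA'cf⟩, hA'img⟩ := hA'
      rw [hrecon A hAcf hAimg, hrecon A' hA'cf hA'img, heq]
    · intro S hS
      rw [Finset.mem_powerset] at hS
      refine ⟨g S, ?_, (hfilg S hS)⟩
      simp only [Finset.mem_filter]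
      exact ⟨⟨Finset.mem_univ _, hcardg S hS, hcfg S hS⟩, himg S hS⟩
  rw [Finset.sum_congr rfl hfib, Finset.sum_const, Finset.card_powersetCard, hRcard,
    smul_eq_mul]
end

section
/- Exponential failure-probability bound for random classical queries (achievability Proposition, part 1): Let N ≥ 1 and M be natural numbers with M ≤ 2^{N−1}. Then, as real numbers, (C(2^{N−1}, M)·2^M) / C(2^N, M) ≤ exp(−M·(M−1)/2^{N+1}). -/
open Finset

lemma choose_cast_prod (n M : ℕ) (h : M ≤ n) :
    (Nat.choose n M : ℝ) * (M.factorial : ℝ) = ∏ i ∈ range M, ((n : ℝ) - i) := by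
  have := Nat.descFactorial_eq_factorial_mul_choose n M
  have hcast : ((n.descFactorial M : ℕ) : ℝ) = ∏ i ∈ range M, ((n : ℝ) - i) := by
    rw [Nat.descFactorial_eq_prod_range]
    push_cast
    refine Finset.prod_congr rfl fun i hi => ?_
    have : i ≤ n := le_trans (le_of_lt (mem_range.mp hi)) h
    push_cast [Nat.cast_sub this]
    ring
  rw [← hcast, this]
  push_cast
  ring

lemma sum_range_cast (M : ℕ) : ∑ i ∈ range M, (i : ℝ) = (M : ℝ) * ((M : ℝ) - 1) / 2 := by
  induction M with
  | zero => simp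
  | succ n ih => rw [Finset.sum_range_succ, ih]; push_cast; ring

/-- **Exponential failure-probability bound for random classical queries**
(achievability Proposition, part 1). -/
theorem simon_failure_probability_bound
    (N : ℕ) (hN : 1 ≤ N) (M : ℕ) (hM : M ≤ 2 ^ (N - 1)) :
    ((Nat.choose (2 ^ (N - 1)) M : ℝ) * 2 ^ M) / (Nat.choose (2 ^ N) M : ℝ) ≤
      Real.exp (-((M : ℝ) * ((M : ℝ) - 1)) / 2 ^ (N + 1)) := by
  set K : ℕ := 2 ^ (N - 1) with hK
  have h2N : 2 ^ N = 2 * K := by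
    rw [hK, ← pow_succ']
    congr 1
    omega
  have hM2 : M ≤ 2 * K := le_trans hM (by omega)
  have hk : (K : ℝ) = 2 ^ (N - 1) := by rw [hK]; push_cast; ring
  have hKpos : (0:ℝ) < K := by positivity
  have hfac : (0:ℝ) < (M.factorial : ℝ) := by positivity
  -- rewrite LHS as a product of ratios
  have hnum := choose_cast_prod K M hM
  have hden := choose_cast_prod (2 * K) M hM2
  have hdenpos : (0:ℝ) < (Nat.choose (2 * K) M : ℝ) := by
    exact_mod_cast Nat.cast_pos.mpr (Nat.choose_pos hM2)
  have key : ((Nat.choose K M : ℝ) * 2 ^ M) / (Nat.choose (2 * K) M : ℝ) =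
      ∏ i ∈ range M, (2 * ((K : ℝ) - i)) / ((2 * K : ℝ) - i) := by
    rw [Finset.prod_div_distrib]
    have h1 : ∏ i ∈ range M, (2 * ((K : ℝ) - i)) =
        (2:ℝ) ^ M * ∏ i ∈ range M, ((K : ℝ) - i) := by
      rw [Finset.prod_mul_distrib, Finset.prod_const]
      congr 1
      simp
    rw [h1, ← hnum]
    have h2 : ∏ i ∈ range M, ((2 * K : ℝ) - i) =
        (Nat.choose (2 * K) M : ℝ) * (M.factorial : ℝ) := by
      rw [hden]; push_cast; ring_nf
    rw [h2]
    field_simp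
  rw [h2N, key]
  -- bound each factor
  have hbound : ∀ i ∈ range M, (2 * ((K : ℝ) - i)) / ((2 * K : ℝ) - i) ≤
      Real.exp (-(i : ℝ) / (2 * K)) := by
    intro i hi
    have hiM : i < M := mem_range.mp hi
    have hiK : (i : ℝ) < K := by exact_mod_cast lt_of_lt_of_le hiM hM
    have hd : (0:ℝ) < (2 * K : ℝ) - i := by linarith
    have heq : (2 * ((K : ℝ) - i)) / ((2 * K : ℝ) - i) = 1 - (i : ℝ) / ((2 * K : ℝ) - i) := by
      field_simp
      ring
    rw [heq]
    have h1 : (i : ℝ) / (2 * K) ≤ (i : ℝ) / ((2 * K : ℝ) - i) := by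
      apply div_le_div_of_nonneg_left (by positivity) hd (by linarith)
    have h2 : 1 - (i : ℝ) / ((2 * K : ℝ) - i) ≤ 1 - (i : ℝ) / (2 * K) := by linarith
    refine le_trans h2 ?_
    rw [neg_div]
    have := Real.add_one_le_exp (-((i : ℝ) / (2 * K)))
    linarith
  have hprod : ∏ i ∈ range M, (2 * ((K : ℝ) - i)) / ((2 * K : ℝ) - i) ≤
      ∏ i ∈ range M, Real.exp (-(i : ℝ) / (2 * K)) := by
    apply Finset.prod_le_prod
    · intro i hi
      have hiM : i < M := mem_range.mp hi
      have hiK : (i : ℝ) < K := by exact_mod_cast lt_of_lt_of_le hiM hM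
      apply div_nonneg (by linarith) (by linarith)
    · exact hbound
  refine le_trans hprod ?_
  rw [← Real.exp_sum]
  apply Real.exp_le_exp.mpr
  have hsum : ∑ i ∈ range M, (-(i : ℝ) / (2 * K)) =
      -(∑ i ∈ range M, (i : ℝ)) / (2 * K) := by
    rw [← Finset.sum_div, ← Finset.sum_neg_distrib]
  rw [hsum, sum_range_cast]
  have h4K : (2:ℝ) ^ (N + 1) = 4 * K := by
    rw [hk, show N + 1 = (N - 1) + 2 by omega, pow_add]
    ring
  rw [h4K]
  rw [div_le_div_iff₀ (by positivity) (by positivity)]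
  ring_nf
  nlinarith [hKpos]
end
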